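/- Let $\xi_{k,\ell,n}$ be random variables such that for each $n$ the $\sigma$-algebras $\sigma(\xi_{k,\ell,n} : \ell \in \mathbb{N})$, $k \in \mathbb{N}$, are independent, with $\sup_{k,\ell,n} \mathbb{E}[\xi_{k,\ell,n}^8] < \infty$. Let $K_n = nK + o(n)$, $L_n = nL + o(n)$ with $K, L > 0$. Then $n^{-2} \sum_{k=1}^{K_n} \sum_{\ell=1}^{L_n} (\xi_{k,\ell,n} - \mathbb{E}[\xi_{k,\ell,n}]) \to 0$ almost surely as $n \to \infty$. -/

import Mathlib

/-!
Centre the variables and group them by rows: the row sums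
`Y k = ∑ ℓ (ξ k ℓ - E ξ k ℓ)` are independent and centred, so in the expansion of `E (∑ k Y k)^4`
only the terms `E Y_k^4` and `E Y_j^2 E Y_k^2` survive. Bounding `E Y_k^p ≤ L_n^p 2^p sup E ξ^p`
gives `E S_n^4 = O(K_n L_n^4 + K_n^2 L_n^4) = O(n^6)`, hence `∑ₙ E (S_n / n^2)^4 < ∞`.
By monotone convergence `∑ₙ (S_n / n^2)^4 < ∞` almost surely, so `S_n / n^2 → 0` almost surely.
-/

open MeasureTheory ProbabilityTheory Filter Topology

section Moments

variable {Ω : Type*} {mΩ : MeasurableSpace Ω} {μ : Measure Ω}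

lemma abs_pow_le_one_add_pow (x : ℝ) {p q : ℕ} (hpq : p ≤ q) (hq : Even q) :
    |x| ^ p ≤ 1 + x ^ q := by
  rw [← hq.pow_abs]
  rcases le_total |x| 1 with h | h
  · linarith [pow_le_one₀ (n := p) (abs_nonneg x) h, pow_nonneg (abs_nonneg x) q]
  · linarith [pow_le_pow_right₀ h hpq]

lemma memLp_of_integrable_pow {X : Ω → ℝ} {p : ℕ} (hp : Even p)
    (hX : AEStronglyMeasurable X μ) (h : Integrable (fun ω => X ω ^ p) μ) : MemLp X p μ := by
  rcases eq_or_ne p 0 with rfl | hp0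
  · simpa using hX
  rw [← integrable_norm_rpow_iff hX (by exact_mod_cast hp0) (by simp)]
  simpa [Real.norm_eq_abs, hp.pow_abs] using h

variable [IsFiniteMeasure μ]

lemma MeasureTheory.MemLp.integrable_pow_of_le {X : Ω → ℝ} {p q : ℕ} (hX : MemLp X q μ)
    (hpq : p ≤ q) : Integrable (fun ω => X ω ^ p) μ :=
  (hX.mono_exponent (by exact_mod_cast hpq)).integrable_norm_pow'.mono'
    (hX.aestronglyMeasurable.pow p) (ae_of_all _ fun ω => by simp [norm_pow])

lemma integral_sum_pow_le {ι : Type*} {X : ι → Ω → ℝ} {s : Finset ι} {p : ℕ} (hp : Even p)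
    (hp0 : p ≠ 0) (hX : ∀ i ∈ s, MemLp (X i) p μ) {B : ℝ}
    (hB : ∀ i ∈ s, ∫ ω, X i ω ^ p ∂μ ≤ B) :
    ∫ ω, (∑ i ∈ s, X i ω) ^ p ∂μ ≤ (s.card : ℝ) ^ p * B := by
  obtain ⟨q, rfl⟩ := Nat.exists_eq_add_one_of_ne_zero hp0
  have hXp : ∀ i ∈ s, Integrable (fun ω => X i ω ^ (q + 1)) μ :=
    fun i hi => (hX i hi).integrable_pow_of_le le_rfl
  have pointwise : ∀ ω, (∑ i ∈ s, X i ω) ^ (q + 1) ≤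
      (s.card : ℝ) ^ q * ∑ i ∈ s, X i ω ^ (q + 1) := fun ω => by
    rw [← hp.pow_abs]
    simp_rw [← hp.pow_abs (X _ ω)]
    exact (pow_le_pow_left₀ (abs_nonneg _) (Finset.abs_sum_le_sum_abs _ _) _).trans
      (pow_sum_le_card_mul_sum_pow (fun i _ => abs_nonneg _) q)
  calc ∫ ω, (∑ i ∈ s, X i ω) ^ (q + 1) ∂μ
      ≤ ∫ ω, (s.card : ℝ) ^ q * ∑ i ∈ s, X i ω ^ (q + 1) ∂μ :=
        integral_mono ((memLp_finsetSum s hX).integrable_pow_of_le le_rfl)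
          ((integrable_finsetSum s hXp).const_mul _) pointwise
    _ = (s.card : ℝ) ^ q * ∑ i ∈ s, ∫ ω, X i ω ^ (q + 1) ∂μ := by
        rw [integral_const_mul, integral_finsetSum s hXp]
    _ ≤ (s.card : ℝ) ^ q * (s.card * B) := by
        gcongr
        simpa using Finset.sum_le_sum hB
    _ = (s.card : ℝ) ^ (q + 1) * B := by ring

variable [IsProbabilityMeasure μ]

lemma integral_pow_le_one_add_integral_pow {X : Ω → ℝ} {p q : ℕ} (hX : MemLp X q μ)
    (hq : Even q) (hpq : p ≤ q) : ∫ ω, X ω ^ p ∂μ ≤ 1 + ∫ ω, X ω ^ q ∂μ := by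
  have hXq := hX.integrable_pow_of_le le_rfl
  calc ∫ ω, X ω ^ p ∂μ ≤ ∫ ω, 1 + X ω ^ q ∂μ :=
        integral_mono (hX.integrable_pow_of_le hpq) ((integrable_const 1).add hXq) fun ω =>
          (le_abs_self _).trans ((abs_pow _ _).trans_le (abs_pow_le_one_add_pow _ hpq hq))
    _ = 1 + ∫ ω, X ω ^ q ∂μ := by simp [integral_add (integrable_const 1) hXq]

lemma integral_sub_integral_pow_le {X : Ω → ℝ} {p : ℕ} (hp : Even p) (hX : MemLp X p μ) :
    ∫ ω, (X ω - ∫ ω', X ω' ∂μ) ^ p ∂μ ≤ 2 ^ p * ∫ ω, X ω ^ p ∂μ := by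
  rcases eq_or_ne p 0 with rfl | hp0
  · simp
  have hp1 : 1 ≤ p := Nat.one_le_iff_ne_zero.2 hp0
  set c := ∫ ω', X ω' ∂μ
  have hXp := hX.integrable_pow_of_le le_rfl
  have jensen : c ^ p ≤ ∫ ω, X ω ^ p ∂μ :=
    hp.convexOn_pow.map_integral_le (continuous_pow p).continuousOn isClosed_univ
      (ae_of_all _ fun _ => Set.mem_univ _) (hX.integrable (by exact_mod_cast hp1)) hXp
  have pointwise : ∀ x : ℝ, (x - c) ^ p ≤ 2 ^ (p - 1) * (x ^ p + c ^ p) := fun x => by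
    rw [← hp.pow_abs, ← hp.pow_abs x, ← hp.pow_abs c]
    exact (pow_le_pow_left₀ (abs_nonneg _) (abs_sub _ _) p).trans
      (add_pow_le (abs_nonneg _) (abs_nonneg _) p)
  calc ∫ ω, (X ω - c) ^ p ∂μ ≤ ∫ ω, 2 ^ (p - 1) * (X ω ^ p + c ^ p) ∂μ :=
        integral_mono ((hX.sub (memLp_const c)).integrable_pow_of_le le_rfl)
          ((hXp.add (integrable_const _)).const_mul _) fun ω => pointwise (X ω)
    _ = 2 ^ (p - 1) * (∫ ω, X ω ^ p ∂μ + c ^ p) := by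
        rw [integral_const_mul, integral_add hXp (integrable_const _)]; simp
    _ ≤ 2 ^ (p - 1) * (2 * ∫ ω, X ω ^ p ∂μ) := by gcongr; linarith
    _ = 2 ^ p * ∫ ω, X ω ^ p ∂μ := by rw [← mul_assoc, ← pow_succ, Nat.sub_add_cancel hp1]

end Moments

section Independence

variable {Ω ι : Type*} {mΩ : MeasurableSpace Ω} {μ : Measure Ω} {Y : ι → Ω → ℝ}

lemma integral_sum_eq_zero (hY : ∀ i, Integrable (Y i) μ) (hY0 : ∀ i, ∫ ω, Y i ω ∂μ = 0)
    (s : Finset ι) : ∫ ω, ∑ i ∈ s, Y i ω ∂μ = 0 := by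
  simp [integral_finsetSum s fun i _ => hY i, hY0]

lemma ProbabilityTheory.iIndep.iIndepFun_of_measurable {β : Type*} [MeasurableSpace β]
    {m : ι → MeasurableSpace Ω} (h : iIndep m μ) {Z : ι → Ω → β}
    (hZ : ∀ i, Measurable[m i] (Z i)) : iIndepFun Z μ :=
  (iIndepFun_iff_iIndep _ _ _).2 (iIndep_of_iIndep_of_le h fun i => (hZ i).comap_le)

lemma ProbabilityTheory.iIndepFun.indepFun_sum_of_notMem (hind : iIndepFun Y μ)
    (hY : ∀ i, AEMeasurable (Y i) μ) {s : Finset ι} {a : ι} (ha : a ∉ s) :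
    IndepFun (fun ω => ∑ i ∈ s, Y i ω) (Y a) μ := by
  simpa only [Finset.sum_fn] using hind.indepFun_finsetSum_of_notMem₀ hY ha

lemma ProbabilityTheory.IndepFun.integral_add_pow [IsFiniteMeasure μ] {X Z : Ω → ℝ}
    (hXZ : IndepFun X Z μ) {p : ℕ} (hX : MemLp X p μ) (hZ : MemLp Z p μ) :
    ∫ ω, (X ω + Z ω) ^ p ∂μ = ∑ j ∈ Finset.range (p + 1),
      (∫ ω, X ω ^ j ∂μ) * (∫ ω, Z ω ^ (p - j) ∂μ) * (p.choose j) := by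
  have hpow : ∀ j, IndepFun (fun ω => X ω ^ j) (fun ω => Z ω ^ (p - j)) μ := fun j =>
    hXZ.comp (measurable_id.pow_const j) (measurable_id.pow_const (p - j))
  have hXj : ∀ j ∈ Finset.range (p + 1), Integrable (fun ω => X ω ^ j) μ :=
    fun j hj => hX.integrable_pow_of_le (Finset.mem_range_succ_iff.1 hj)
  have hZj : ∀ j, Integrable (fun ω => Z ω ^ (p - j)) μ :=
    fun j => hZ.integrable_pow_of_le (Nat.sub_le p j)
  have hint : ∀ j ∈ Finset.range (p + 1),
      Integrable (fun ω => X ω ^ j * Z ω ^ (p - j) * (p.choose j)) μ :=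
    fun j hj => ((hpow j).integrable_mul (hXj j hj) (hZj j)).mul_const _
  simp_rw [add_pow]
  rw [integral_finsetSum _ hint]
  refine Finset.sum_congr rfl fun j hj => ?_
  rw [integral_mul_const,
    (hpow j).integral_fun_mul_eq_mul_integral (hXj j hj).1 (hZj j).1]

variable [IsProbabilityMeasure μ]

lemma ProbabilityTheory.IndepFun.integral_add_sq {X Z : Ω → ℝ} (hXZ : IndepFun X Z μ)
    (hX : MemLp X 2 μ) (hZ : MemLp Z 2 μ) (hX0 : ∫ ω, X ω ∂μ = 0) :
    ∫ ω, (X ω + Z ω) ^ 2 ∂μ = ∫ ω, X ω ^ 2 ∂μ + ∫ ω, Z ω ^ 2 ∂μ := by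
  simp [hXZ.integral_add_pow hX hZ, Finset.sum_range_succ, hX0]
  ring

lemma ProbabilityTheory.IndepFun.integral_add_pow_four {X Z : Ω → ℝ} (hXZ : IndepFun X Z μ)
    (hX : MemLp X 4 μ) (hZ : MemLp Z 4 μ) (hX0 : ∫ ω, X ω ∂μ = 0) (hZ0 : ∫ ω, Z ω ∂μ = 0) :
    ∫ ω, (X ω + Z ω) ^ 4 ∂μ = ∫ ω, X ω ^ 4 ∂μ
      + 6 * (∫ ω, X ω ^ 2 ∂μ) * (∫ ω, Z ω ^ 2 ∂μ) + ∫ ω, Z ω ^ 4 ∂μ := by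
  simp [hXZ.integral_add_pow hX hZ, Finset.sum_range_succ, hX0, hZ0, Nat.choose]
  ring

lemma ProbabilityTheory.iIndepFun.integral_sum_sq (hind : iIndepFun Y μ)
    (hY : ∀ i, MemLp (Y i) 2 μ) (hY0 : ∀ i, ∫ ω, Y i ω ∂μ = 0) (s : Finset ι) :
    ∫ ω, (∑ i ∈ s, Y i ω) ^ 2 ∂μ = ∑ i ∈ s, ∫ ω, Y i ω ^ 2 ∂μ := by
  classical
  induction s using Finset.induction with
  | empty => simp
  | @insert a s ha ih =>
    have hXY := hind.indepFun_sum_of_notMem (fun i => (hY i).aestronglyMeasurable.aemeasurable) ha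
    simp_rw [Finset.sum_insert ha, add_comm (Y a _)]
    rw [hXY.integral_add_sq (memLp_finsetSum s fun i _ => hY i) (hY a)
      (integral_sum_eq_zero (fun i => (hY i).integrable one_le_two) hY0 s), ih, add_comm]

lemma ProbabilityTheory.iIndepFun.integral_sum_pow_four_le (hind : iIndepFun Y μ)
    (hY : ∀ i, MemLp (Y i) 4 μ) (hY0 : ∀ i, ∫ ω, Y i ω ∂μ = 0) (s : Finset ι) :
    ∫ ω, (∑ i ∈ s, Y i ω) ^ 4 ∂μ ≤
      ∑ i ∈ s, ∫ ω, Y i ω ^ 4 ∂μ + 3 * (∑ i ∈ s, ∫ ω, Y i ω ^ 2 ∂μ) ^ 2 := by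
  classical
  have hY2 : ∀ i, MemLp (Y i) 2 μ := fun i => (hY i).mono_exponent (by norm_num)
  induction s using Finset.induction with
  | empty => simp
  | @insert a s ha ih =>
    have hXY := hind.indepFun_sum_of_notMem (fun i => (hY i).aestronglyMeasurable.aemeasurable) ha
    simp_rw [Finset.sum_insert ha, add_comm (Y a _)]
    rw [hXY.integral_add_pow_four (memLp_finsetSum s fun i _ => hY i) (hY a)
      (integral_sum_eq_zero (fun i => (hY i).integrable (by norm_num)) hY0 s) (hY0 a),
      hind.integral_sum_sq hY2 hY0 s]
    nlinarith [sq_nonneg (∫ ω, Y a ω ^ 2 ∂μ)]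

end Independence

lemma integral_sum_sum_sub_integral_pow_four_le {Ω ι κ : Type*} {mΩ : MeasurableSpace Ω}
    {μ : Measure Ω} [IsProbabilityMeasure μ] {ξ : ι → κ → Ω → ℝ}
    (hind : iIndep (fun k => ⨆ ℓ, MeasurableSpace.comap (ξ k ℓ) (borel ℝ)) μ)
    (hξ : ∀ k ℓ, MemLp (ξ k ℓ) 4 μ) {B : ℝ} (hB2 : ∀ k ℓ, ∫ ω, ξ k ℓ ω ^ 2 ∂μ ≤ B)
    (hB4 : ∀ k ℓ, ∫ ω, ξ k ℓ ω ^ 4 ∂μ ≤ B) (s : Finset ι) (t : Finset κ) :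
    ∫ ω, (∑ k ∈ s, ∑ ℓ ∈ t, (ξ k ℓ ω - ∫ ω', ξ k ℓ ω' ∂μ)) ^ 4 ∂μ ≤
      16 * B * s.card * t.card ^ 4 + 48 * B ^ 2 * (s.card * t.card ^ 2) ^ 2 := by
  set Y : ι → Ω → ℝ := fun k ω => ∑ ℓ ∈ t, (ξ k ℓ ω - ∫ ω', ξ k ℓ ω' ∂μ)
  have hcent : ∀ k ℓ, MemLp (fun ω => ξ k ℓ ω - ∫ ω', ξ k ℓ ω' ∂μ) 4 μ :=
    fun k ℓ => (hξ k ℓ).sub (memLp_const _)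
  have hY : ∀ k, MemLp (Y k) 4 μ := fun k => memLp_finsetSum t fun ℓ _ => hcent k ℓ
  have hY0 : ∀ k, ∫ ω, Y k ω ∂μ = 0 := fun k =>
    integral_sum_eq_zero (fun ℓ => (hcent k ℓ).integrable (by norm_num)) (fun ℓ => by
      simp [integral_sub ((hξ k ℓ).integrable (by norm_num)) (integrable_const _)]) t
  have hindY : iIndepFun Y μ := hind.iIndepFun_of_measurable fun k =>
    Finset.measurable_sum _ fun ℓ _ =>
      (measurable_iff_comap_le.2 (le_iSup (fun ℓ => (borel ℝ).comap (ξ k ℓ)) ℓ)).sub_const _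
  have hY2 : ∀ k, ∫ ω, Y k ω ^ 2 ∂μ ≤ t.card ^ 2 * (2 ^ 2 * B) := fun k =>
    integral_sum_pow_le even_two two_ne_zero
      (fun ℓ _ => (hcent k ℓ).mono_exponent (by norm_num)) fun ℓ _ =>
      (integral_sub_integral_pow_le even_two ((hξ k ℓ).mono_exponent (by norm_num))).trans
        (by gcongr; exact hB2 k ℓ)
  have hY4 : ∀ k, ∫ ω, Y k ω ^ 4 ∂μ ≤ t.card ^ 4 * (2 ^ 4 * B) := fun k =>
    integral_sum_pow_le (by decide) four_ne_zero (fun ℓ _ => hcent k ℓ) fun ℓ _ =>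
      (integral_sub_integral_pow_le (by decide) (hξ k ℓ)).trans (by gcongr; exact hB4 k ℓ)
  calc ∫ ω, (∑ k ∈ s, Y k ω) ^ 4 ∂μ
      ≤ ∑ k ∈ s, ∫ ω, Y k ω ^ 4 ∂μ + 3 * (∑ k ∈ s, ∫ ω, Y k ω ^ 2 ∂μ) ^ 2 :=
        hindY.integral_sum_pow_four_le hY hY0 s
    _ ≤ ∑ k ∈ s, t.card ^ 4 * (2 ^ 4 * B) + 3 * (∑ k ∈ s, t.card ^ 2 * (2 ^ 2 * B)) ^ 2 := by
        gcongr with k _ k _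
        exacts [hY4 k, hY2 k]
    _ = 16 * B * s.card * t.card ^ 4 + 48 * B ^ 2 * (s.card * t.card ^ 2) ^ 2 := by
        simp only [Finset.sum_const, nsmul_eq_mul]; ring

lemma ae_tendsto_zero_of_summable_integral_norm_pow {Ω E : Type*} {mΩ : MeasurableSpace Ω}
    {μ : Measure Ω} [NormedAddCommGroup E] {Z : ℕ → Ω → E} {p : ℕ} (hp : p ≠ 0)
    (hZ : ∀ n, Integrable (fun ω => ‖Z n ω‖ ^ p) μ)
    (hsum : Summable fun n => ∫ ω, ‖Z n ω‖ ^ p ∂μ) :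
    ∀ᵐ ω ∂μ, Tendsto (fun n => Z n ω) atTop (𝓝 0) := by
  have hfin : ∑' n, eLpNorm (fun ω => ‖Z n ω‖ ^ p) 1 μ ≠ ⊤ := by
    simp_rw [eLpNorm_one_eq_lintegral_enorm, ← ofReal_integral_norm_eq_lintegral_enorm (hZ _),
      norm_pow, norm_norm]
    rw [← ENNReal.ofReal_tsum_of_nonneg (fun n => by positivity) hsum]
    exact ENNReal.ofReal_ne_top
  filter_upwards [summable_norm_of_tsum_eLpNorm_ne_top le_rfl (fun n => (hZ n).1) hfin]
    with ω hω
  have hroot : Tendsto (fun x : ℝ => x ^ (p⁻¹ : ℝ)) (𝓝 0) (𝓝 0) := by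
    simpa [Real.zero_rpow (inv_ne_zero (Nat.cast_ne_zero.2 hp))] using
      (Real.continuous_rpow_const (inv_nonneg.2 (Nat.cast_nonneg p))).tendsto 0
  rw [tendsto_zero_iff_norm_tendsto_zero]
  refine (hroot.comp (tendsto_norm_zero.comp hω.tendsto_atTop_zero)).congr fun n => ?_
  simp [norm_pow, Real.pow_rpow_inv_natCast (norm_nonneg _) hp]

lemma summable_div_sq_of_tendsto {v : ℕ → ℝ} {c : ℝ} (hv : Tendsto v atTop (𝓝 c)) :
    Summable fun n : ℕ => v n / (n : ℝ) ^ 2 := by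
  obtain ⟨R, hR⟩ := hv.norm.bddAbove_range
  refine (Real.summable_nat_pow_inv.2 one_lt_two |>.mul_left R).of_norm_bounded fun n => ?_
  rw [norm_div, norm_pow, Real.norm_natCast, div_eq_mul_inv]
  exact mul_le_mul_of_nonneg_right (hR ⟨n, rfl⟩) (by positivity)

lemma summable_div_pow_eight_of_tendsto_div {Kn Ln : ℕ → ℕ} {K L : ℝ}
    (hKn : Tendsto (fun n => (Kn n : ℝ) / n) atTop (𝓝 K))
    (hLn : Tendsto (fun n => (Ln n : ℝ) / n) atTop (𝓝 L)) (a b : ℝ) :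
    Summable fun n : ℕ =>
      (a * Kn n * Ln n ^ 4 + b * ((Kn n : ℝ) * Ln n ^ 2) ^ 2) / (n : ℝ) ^ 8 := by
  have hv : Tendsto (fun n : ℕ => a * (Kn n / n) * (Ln n / n) ^ 4 * (1 / n)
      + b * ((Kn n / n) * (Ln n / n) ^ 2) ^ 2) atTop
      (𝓝 (a * K * L ^ 4 * 0 + b * (K * L ^ 2) ^ 2)) :=
    (((tendsto_const_nhds.mul hKn).mul (hLn.pow 4)).mul tendsto_one_div_atTop_nhds_zero_nat).add
      ((hKn.mul (hLn.pow 2)).pow 2 |>.const_mul b)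
  exact (summable_div_sq_of_tendsto hv).congr fun n => by ring

theorem stmt3_general
    {Ω : Type*} [MeasureSpace Ω] [IsProbabilityMeasure (ℙ : Measure Ω)]
    (ξ : ℕ → ℕ → ℕ → Ω → ℝ)
    (hmeas : ∀ n k ℓ, Measurable (ξ n k ℓ))
    (hindep : ∀ n, iIndep
      (fun k : ℕ => ⨆ ℓ : ℕ, MeasurableSpace.comap (ξ n k ℓ) (borel ℝ)) ℙ)
    (M : ℝ)
    (hmom : ∀ n k ℓ, ∫ ω, (ξ n k ℓ ω) ^ 8 ∂ℙ ≤ M)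
    (hint : ∀ n k ℓ, Integrable (fun ω => (ξ n k ℓ ω) ^ 8) ℙ)
    (K L : ℝ)
    (Kn Ln : ℕ → ℕ)
    (hKn : Tendsto (fun n => (Kn n : ℝ) / n) atTop (nhds K))
    (hLn : Tendsto (fun n => (Ln n : ℝ) / n) atTop (nhds L)) :
    ∀ᵐ ω ∂(ℙ : Measure Ω),
      Tendsto (fun n : ℕ =>
        (n : ℝ) ^ (-2 : ℤ) *
          ∑ k ∈ Finset.Icc 1 (Kn n), ∑ ℓ ∈ Finset.Icc 1 (Ln n),
            (ξ n k ℓ ω - ∫ ω', ξ n k ℓ ω' ∂ℙ))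
        atTop (nhds 0) := by
  have hξ : ∀ n k ℓ, MemLp (ξ n k ℓ) 8 ℙ := fun n k ℓ =>
    memLp_of_integrable_pow (by decide) (hmeas n k ℓ).aestronglyMeasurable (hint n k ℓ)
  have hB : ∀ p ≤ 8, ∀ n k ℓ, ∫ ω, ξ n k ℓ ω ^ p ∂ℙ ≤ 1 + M := fun p hp n k ℓ =>
    (integral_pow_le_one_add_integral_pow (hξ n k ℓ) (by decide) hp).trans
      (by linarith [hmom n k ℓ])
  set S : ℕ → Ω → ℝ := fun n ω => ∑ k ∈ Finset.Icc 1 (Kn n), ∑ ℓ ∈ Finset.Icc 1 (Ln n),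
    (ξ n k ℓ ω - ∫ ω', ξ n k ℓ ω' ∂ℙ)
  have hS : ∀ n, ∫ ω, S n ω ^ 4 ∂ℙ ≤
      16 * (1 + M) * Kn n * Ln n ^ 4 + 48 * (1 + M) ^ 2 * ((Kn n : ℝ) * Ln n ^ 2) ^ 2 :=
    fun n => by
      simpa only [Nat.card_Icc, add_tsub_cancel_right] using
        integral_sum_sum_sub_integral_pow_four_le (hindep n)
          (fun k ℓ => (hξ n k ℓ).mono_exponent (by norm_num)) (hB 2 (by norm_num) n)
          (hB 4 (by norm_num) n) (Finset.Icc 1 (Kn n)) (Finset.Icc 1 (Ln n))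
  have hSmem : ∀ n, MemLp (S n) 4 ℙ := fun n =>
    memLp_finsetSum _ fun k _ => memLp_finsetSum _ fun ℓ _ =>
      ((hξ n k ℓ).mono_exponent (by norm_num)).sub (memLp_const _)
  refine ae_tendsto_zero_of_summable_integral_norm_pow four_ne_zero
    (fun n => ((hSmem n).const_mul _).integrable_norm_pow') ?_
  refine Summable.of_nonneg_of_le (fun n => by positivity) (fun n => ?_)
    (summable_div_pow_eight_of_tendsto_div hKn hLn (16 * (1 + M)) (48 * (1 + M) ^ 2))
  calc ∫ ω, ‖(n : ℝ) ^ (-2 : ℤ) * S n ω‖ ^ 4 ∂ℙ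
      = (∫ ω, S n ω ^ 4 ∂ℙ) / (n : ℝ) ^ 8 := by
        simp [norm_mul, mul_pow, integral_const_mul, Even.pow_abs ⟨2, rfl⟩, div_eq_inv_mul,
          ← pow_mul]
    _ ≤ _ := by gcongr; exact hS n

theorem stmt3
    {Ω : Type*} [MeasureSpace Ω] [IsProbabilityMeasure (ℙ : Measure Ω)]
    (ξ : ℕ → ℕ → ℕ → Ω → ℝ)
    (hmeas : ∀ n k ℓ, Measurable (ξ n k ℓ))
    (hindep : ∀ n, iIndep
      (fun k : ℕ => ⨆ ℓ : ℕ, MeasurableSpace.comap (ξ n k ℓ) (borel ℝ)) ℙ)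
    (M : ℝ)
    (hmom : ∀ n k ℓ, ∫ ω, (ξ n k ℓ ω) ^ 8 ∂ℙ ≤ M)
    (hint : ∀ n k ℓ, Integrable (fun ω => (ξ n k ℓ ω) ^ 8) ℙ)
    (K L : ℝ) (hK : 0 < K) (hL : 0 < L)
    (Kn Ln : ℕ → ℕ) (hKn0 : ∀ n, 0 < Kn n) (hLn0 : ∀ n, 0 < Ln n)
    (hKn : Tendsto (fun n => (Kn n : ℝ) / n) atTop (nhds K))
    (hLn : Tendsto (fun n => (Ln n : ℝ) / n) atTop (nhds L)) :
    ∀ᵐ ω ∂(ℙ : Measure Ω),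
      Tendsto (fun n : ℕ =>
        (n : ℝ) ^ (-2 : ℤ) *
          ∑ k ∈ Finset.Icc 1 (Kn n), ∑ ℓ ∈ Finset.Icc 1 (Ln n),
            (ξ n k ℓ ω - ∫ ω', ξ n k ℓ ω' ∂ℙ))
        atTop (nhds 0) :=
  stmt3_general ξ hmeas hindep M hmom hint K L Kn Ln hKn hLn
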